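/- Let m be an integer and for each i ∈ ℕ let mᵢ ∈ {0,1,2,3} be the i-th digit of the 4-adic expansion of m, i.e. mᵢ = ⌊m/4^i⌋ mod 4 using floored division (so for m ≥ 0 almost all mᵢ = 0, and for m < 0 almost all mᵢ = 3). Then: (a) if some digit mᵢ belongs to {1,2}, there exists n ∈ ℕ with ψ̄ⁿ(T^m) = T; (b) if every digit mᵢ belongs to {0,3} and m ≥ 0, there exists n ∈ ℕ with ψ̄ⁿ(T^m) = 1; (c) if every digit mᵢ belongs to {0,3} and m < 0, there exists n ∈ ℕ with ψ̄ⁿ(T^m) = T⁻¹. -/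

import Mathlib

noncomputable section

/-- The action of `Equiv.Perm X` on `X → G` by permuting coordinates. -/
def permAut (X G : Type) [Group G] : Equiv.Perm X →* MulAut (X → G) where
  toFun σ :=
  { toFun := fun f => f ∘ ⇑σ⁻¹
    invFun := fun f => f ∘ ⇑σ
    left_inv := fun f => by funext x; simp
    right_inv := fun f => by funext x; simp
    map_mul' := fun f g => rfl }
  map_one' := by ext f x; simp
  map_mul' := fun σ τ => by
    ext f x
    simp [Function.comp, mul_inv_rev]

/-- The wreath product `G ≀ C₂` with base alphabet `Bool`. -/
abbrev Wr (G : Type) [Group G] := (Bool → G) ⋊[permAut Bool G] Equiv.Perm Bool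

/-- `pair g₀ g₁` is the element `⟨g₀, g₁⟩` of the base group. -/
def pair {G : Type} [Group G] (g₀ g₁ : G) : Bool → G := fun x => bif x then g₁ else g₀

/-- The nontrivial element of `Sym({0,1})`. -/
def σswap : Equiv.Perm Bool := Equiv.swap false true

namespace Rabbit

/-- The free group on two generators `S`, `T`. -/
abbrev F := FreeGroup Bool

def Sg : F := FreeGroup.of false
def Tg : F := FreeGroup.of true

/-- The wreath recursion `Φ(T) = ⟨1, S⁻¹T⁻¹⟩σ`, `Φ(S) = ⟨T, 1⟩`. -/
def Phi : F →* Wr F := FreeGroup.lift fun x =>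
  if x then ⟨pair 1 (Sg⁻¹ * Tg⁻¹), σswap⟩ else ⟨pair Tg 1, 1⟩

/-- The section `g|ₓ`. -/
def sec (g : F) (x : Bool) : F := (Phi g).left x

/-- `Φ(g)` is inactive. -/
def inactive (g : F) : Prop := (Phi g).right = 1

open scoped Classical in
/-- The map `ψ̄`. -/
def psibar (g : F) : F := if inactive g then sec g false else Tg * sec g false

end Rabbit

/-- The `i`-th digit of the 4-adic expansion of the integer `m`
(using floored division). -/
def digit (m : ℤ) (i : ℕ) : ℤ := (Int.fdiv m (4 ^ i)) % 4


/-!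
Write `A = S⁻¹T⁻¹`. From `Φ(T²) = ⟨A, A⟩`, `Φ(A) = ⟨S, 1⟩σ`, `Φ(A²) = ⟨S, S⟩` and
`Φ(S) = ⟨T, 1⟩`, three applications of `ψ̄` send
`T^(4q) ↦ A^(2q) ↦ S^q ↦ T^q`, `T^(4q+3) ↦ T A^(2q+1) ↦ S^q ↦ T^q`,
`T^(4q+1) ↦ T A^(2q) ↦ T S^q ↦ T` and `T^(4q+2) ↦ A^(2q+1) ↦ T S^(q+1) ↦ T`.
So `ψ̄³` strips the last 4-adic digit of `m` from `T^m` as long as that digit is `0` or `3`, and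
sends `T^m` to the fixed point `T` of `ψ̄` as soon as it is `1` or `2`. If every digit is `0` or
`3`, after `|m|` rounds the exponent has become `⌊m / 4^|m|⌋`, which is `0` or `-1`.
-/

lemma digit_eq_ediv_emod (m : ℤ) (i : ℕ) : digit m i = m / 4 ^ i % 4 := by
  rw [digit, Int.fdiv_eq_ediv_of_nonneg _ (by positivity)]

lemma abs_lt_pow_natAbs {b : ℕ} (hb : 1 < b) (m : ℤ) : |m| < (b : ℤ) ^ m.natAbs := by
  rw [Int.abs_eq_natAbs]
  exact_mod_cast Nat.lt_pow_self hb

lemma ediv_eq_neg_one_of_neg_of_neg_le {a b : ℤ} (hb : 0 < b) (ha : a < 0) (hba : -b ≤ a) :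
    a / b = -1 :=
  ((Int.ediv_emod_unique (r := a + b) hb).mpr ⟨by ring, by linarith, by linarith⟩).1

section WreathProduct

variable {G : Type} [Group G]

lemma pair_mul (g₀ g₁ h₀ h₁ : G) : pair g₀ g₁ * pair h₀ h₁ = pair (g₀ * h₀) (g₁ * h₁) := by
  funext x; cases x <;> rfl

lemma pair_zpow (g₀ g₁ : G) (k : ℤ) : pair g₀ g₁ ^ k = pair (g₀ ^ k) (g₁ ^ k) := by
  funext x; cases x <;> rfl

lemma pair_one_one : pair (1 : G) 1 = 1 := by
  funext x; cases x <;> rfl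

lemma permAut_swap_pair (g₀ g₁ : G) : permAut Bool G σswap (pair g₀ g₁) = pair g₁ g₀ := by
  funext x; cases x <;> simp [permAut, σswap, pair]

lemma σswap_mul_self : σswap * σswap = 1 := by simp [σswap]

lemma σswap_ne_one : σswap ≠ 1 := fun h => by
  simpa [σswap] using congrArg (fun e : Equiv.Perm Bool => e false) h

lemma wr_mk_mul_mk (f g : Bool → G) (s t : Equiv.Perm Bool) :
    (⟨f, s⟩ * ⟨g, t⟩ : Wr G) = ⟨f * permAut Bool G s g, s * t⟩ := rfl

lemma wr_mk_one_zpow (f : Bool → G) (k : ℤ) : (⟨f, 1⟩ : Wr G) ^ k = ⟨f ^ k, 1⟩ :=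
  (map_zpow (SemidirectProduct.inl : (Bool → G) →* Wr G) f k).symm

lemma wr_pair_σswap_sq (g₀ g₁ : G) :
    (⟨pair g₀ g₁, σswap⟩ : Wr G) ^ (2 : ℤ) = ⟨pair (g₀ * g₁) (g₁ * g₀), 1⟩ := by
  rw [zpow_two, wr_mk_mul_mk, permAut_swap_pair, pair_mul, σswap_mul_self]

end WreathProduct

namespace Rabbit

def Ag : F := Sg⁻¹ * Tg⁻¹

lemma Phi_Tg : Phi Tg = ⟨pair 1 Ag, σswap⟩ := by simp [Phi, Tg, Ag]

lemma Phi_Sg : Phi Sg = ⟨pair Tg 1, 1⟩ := by simp [Phi, Sg]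

lemma Phi_Ag : Phi Ag = ⟨pair Sg 1, σswap⟩ := by
  have hTS : Phi (Tg * Sg) = ⟨pair 1 Sg⁻¹, σswap⟩ := by
    rw [map_mul, Phi_Tg, Phi_Sg, wr_mk_mul_mk, permAut_swap_pair, pair_mul]
    simp [Ag, mul_assoc]
  rw [show Ag = (Tg * Sg)⁻¹ from (mul_inv_rev Tg Sg).symm, map_inv, hTS]
  refine inv_eq_of_mul_eq_one_right ?_
  rw [wr_mk_mul_mk, permAut_swap_pair, pair_mul, σswap_mul_self, one_mul, inv_mul_cancel,
    pair_one_one]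
  rfl

lemma Phi_Sg_zpow (j : ℤ) : Phi (Sg ^ j) = ⟨pair (Tg ^ j) 1, 1⟩ := by
  rw [map_zpow, Phi_Sg, wr_mk_one_zpow, pair_zpow, one_zpow]

lemma Phi_Tg_zpow_two_mul (k : ℤ) : Phi (Tg ^ (2 * k)) = ⟨pair (Ag ^ k) (Ag ^ k), 1⟩ := by
  rw [zpow_mul, map_zpow, map_zpow, Phi_Tg, wr_pair_σswap_sq, one_mul, mul_one, wr_mk_one_zpow,
    pair_zpow]

lemma Phi_Ag_zpow_two_mul (j : ℤ) : Phi (Ag ^ (2 * j)) = ⟨pair (Sg ^ j) (Sg ^ j), 1⟩ := by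
  rw [zpow_mul, map_zpow, map_zpow, Phi_Ag, wr_pair_σswap_sq, one_mul, mul_one, wr_mk_one_zpow,
    pair_zpow]

lemma Phi_Ag_zpow_two_mul_add_one (j : ℤ) :
    Phi (Ag ^ (2 * j + 1)) = ⟨pair (Sg ^ (j + 1)) (Sg ^ j), σswap⟩ := by
  rw [zpow_add_one, map_mul, Phi_Ag_zpow_two_mul, Phi_Ag, wr_mk_mul_mk, map_one,
    MulAut.one_apply, pair_mul, mul_one, one_mul, zpow_add_one]

lemma psibar_of_Phi_eq_inactive {g : F} {f : Bool → F} (h : Phi g = ⟨f, 1⟩) :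
    psibar g = f false := by
  rw [psibar, if_pos (by rw [inactive, h]), sec, h]

lemma psibar_of_Phi_eq_active {g : F} {f : Bool → F} (h : Phi g = ⟨f, σswap⟩) :
    psibar g = Tg * f false := by
  rw [psibar, if_neg (by rw [inactive, h]; exact σswap_ne_one), sec, h]

lemma psibar_Sg_zpow (j : ℤ) : psibar (Sg ^ j) = Tg ^ j :=
  psibar_of_Phi_eq_inactive (Phi_Sg_zpow j)

lemma psibar_Tg_mul_Sg_zpow (j : ℤ) : psibar (Tg * Sg ^ j) = Tg := by
  have h : Phi (Tg * Sg ^ j) = ⟨pair 1 (Ag * Tg ^ j), σswap⟩ := by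
    rw [map_mul, Phi_Tg, Phi_Sg_zpow, wr_mk_mul_mk, permAut_swap_pair, pair_mul, one_mul, mul_one]
  exact (psibar_of_Phi_eq_active h).trans (mul_one Tg)

lemma psibar_Tg_zpow_two_mul (k : ℤ) : psibar (Tg ^ (2 * k)) = Ag ^ k :=
  psibar_of_Phi_eq_inactive (Phi_Tg_zpow_two_mul k)

lemma psibar_Tg_zpow_two_mul_add_one (k : ℤ) : psibar (Tg ^ (2 * k + 1)) = Tg * Ag ^ k := by
  have h : Phi (Tg ^ (2 * k + 1)) = ⟨pair (Ag ^ k) (Ag ^ (k + 1)), σswap⟩ := by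
    rw [zpow_add_one, map_mul, Phi_Tg_zpow_two_mul, Phi_Tg, wr_mk_mul_mk, map_one,
      MulAut.one_apply, pair_mul, one_mul, mul_one, zpow_add_one]
  exact psibar_of_Phi_eq_active h

lemma psibar_Ag_zpow_two_mul (j : ℤ) : psibar (Ag ^ (2 * j)) = Sg ^ j :=
  psibar_of_Phi_eq_inactive (Phi_Ag_zpow_two_mul j)

lemma psibar_Ag_zpow_two_mul_add_one (j : ℤ) :
    psibar (Ag ^ (2 * j + 1)) = Tg * Sg ^ (j + 1) :=
  psibar_of_Phi_eq_active (Phi_Ag_zpow_two_mul_add_one j)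

lemma psibar_Tg_mul_Ag_zpow_two_mul (j : ℤ) : psibar (Tg * Ag ^ (2 * j)) = Tg * Sg ^ j := by
  have h : Phi (Tg * Ag ^ (2 * j)) = ⟨pair (Sg ^ j) (Ag * Sg ^ j), σswap⟩ := by
    rw [map_mul, Phi_Tg, Phi_Ag_zpow_two_mul, wr_mk_mul_mk, permAut_swap_pair, pair_mul, one_mul,
      mul_one]
  exact psibar_of_Phi_eq_active h

lemma psibar_Tg_mul_Ag_zpow_two_mul_add_one (j : ℤ) :
    psibar (Tg * Ag ^ (2 * j + 1)) = Sg ^ j := by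
  have h : Phi (Tg * Ag ^ (2 * j + 1)) = ⟨pair (Sg ^ j) (Ag * Sg ^ (j + 1)), 1⟩ := by
    rw [map_mul, Phi_Tg, Phi_Ag_zpow_two_mul_add_one, wr_mk_mul_mk, permAut_swap_pair, pair_mul,
      one_mul, σswap_mul_self]
  exact psibar_of_Phi_eq_inactive h

lemma psibar_iterate_three_Tg_zpow_eq_ediv_four (m : ℤ) (h : m % 4 = 0 ∨ m % 4 = 3) :
    psibar^[3] (Tg ^ m) = Tg ^ (m / 4) := by
  show psibar (psibar (psibar _)) = _
  rcases h with h | h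
  · conv_lhs => rw [show m = 2 * (2 * (m / 4)) by omega]
    rw [psibar_Tg_zpow_two_mul, psibar_Ag_zpow_two_mul, psibar_Sg_zpow]
  · conv_lhs => rw [show m = 2 * (2 * (m / 4) + 1) + 1 by omega]
    rw [psibar_Tg_zpow_two_mul_add_one, psibar_Tg_mul_Ag_zpow_two_mul_add_one, psibar_Sg_zpow]

lemma psibar_iterate_three_Tg_zpow_eq_Tg (m : ℤ) (h : m % 4 = 1 ∨ m % 4 = 2) :
    psibar^[3] (Tg ^ m) = Tg := by
  show psibar (psibar (psibar _)) = _
  rcases h with h | h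
  · rw [show m = 2 * (2 * (m / 4)) + 1 by omega, psibar_Tg_zpow_two_mul_add_one,
      psibar_Tg_mul_Ag_zpow_two_mul, psibar_Tg_mul_Sg_zpow]
  · rw [show m = 2 * (2 * (m / 4) + 1) by omega, psibar_Tg_zpow_two_mul,
      psibar_Ag_zpow_two_mul_add_one, psibar_Tg_mul_Sg_zpow]

lemma psibar_iterate_three_mul_Tg_zpow (m : ℤ) (k : ℕ)
    (h : ∀ i < k, digit m i = 0 ∨ digit m i = 3) :
    psibar^[3 * k] (Tg ^ m) = Tg ^ (m / 4 ^ k) := by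
  induction k with
  | zero => simp
  | succ k ih =>
    have hk := h k k.lt_succ_self
    rw [digit_eq_ediv_emod] at hk
    rw [mul_add_one, add_comm, Function.iterate_add_apply,
      ih fun i hi => h i (hi.trans k.lt_succ_self), psibar_iterate_three_Tg_zpow_eq_ediv_four _ hk,
      pow_succ, Int.ediv_ediv_of_nonneg (by positivity)]

end Rabbit

open Rabbit in
theorem stmt3 (m : ℤ) :
    ((∃ i : ℕ, digit m i = 1 ∨ digit m i = 2) →
      ∃ n : ℕ, psibar^[n] (Tg ^ m) = Tg) ∧
    ((∀ i : ℕ, digit m i = 0 ∨ digit m i = 3) → 0 ≤ m →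
      ∃ n : ℕ, psibar^[n] (Tg ^ m) = 1) ∧
    ((∀ i : ℕ, digit m i = 0 ∨ digit m i = 3) → m < 0 →
      ∃ n : ℕ, psibar^[n] (Tg ^ m) = Tg⁻¹) := by
  have hbound : |m| < 4 ^ m.natAbs := by exact_mod_cast abs_lt_pow_natAbs (by norm_num) m
  refine ⟨fun hex => ?_, fun hd hm => ?_, fun hd hm => ?_⟩
  · classical
    have hfirst : ∀ i < Nat.find hex, digit m i = 0 ∨ digit m i = 3 := fun i hi => by
      have := Nat.find_min hex hi
      have := digit_eq_ediv_emod m i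
      omega
    refine ⟨3 + 3 * Nat.find hex, ?_⟩
    rw [Function.iterate_add_apply, psibar_iterate_three_mul_Tg_zpow m _ hfirst]
    refine psibar_iterate_three_Tg_zpow_eq_Tg _ ?_
    rw [← digit_eq_ediv_emod]
    exact Nat.find_spec hex
  · rw [abs_of_nonneg hm] at hbound
    refine ⟨3 * m.natAbs, ?_⟩
    rw [psibar_iterate_three_mul_Tg_zpow m _ fun i _ => hd i, Int.ediv_eq_zero_of_lt hm hbound,
      zpow_zero]
  · rw [abs_of_neg hm] at hbound
    refine ⟨3 * m.natAbs, ?_⟩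
    rw [psibar_iterate_three_mul_Tg_zpow m _ fun i _ => hd i,
      ediv_eq_neg_one_of_neg_of_neg_le (by positivity) hm (by linarith), zpow_neg_one]
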